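/- arXiv:1001.1369 — 8 statements merged into one kernel-verified Lean document; each statement's English description precedes it below -/
import Mathlib

section
/- Let d ≥ 1, let x_1, …, x_{d+1} ∈ ℝ^d be affinely independent, let τ be their closed convex hull with Lebesgue measure |τ|, and let λ_1, …, λ_{d+1} be the barycentric coordinate functions of the simplex. Then for all indices k, l ∈ {1, …, d+1}: ∫_τ λ_k(x) λ_l(x) dx = |τ| (1 + δ_{kl}) / ((d+1)(d+2)), where δ_{kl} is the Kronecker delta. -/
/-!
The barycentric coordinates of `τ`, with `λ₀` dropped, form an affine bijection of `ℝ^d` onto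
itself carrying `τ` onto the corner simplex `S_d = {y | 0 ≤ y, ∑ yᵢ ≤ 1}`, `λ₀` to `1 - ∑ yᵢ`
and `λᵢ₊₁` to `yᵢ`. An affine bijection pushes Lebesgue measure to a constant multiple of
Lebesgue measure, so averages over `τ` are averages over `S_d`. On `S_d` the Dirichlet integral
`∫ ∏ yᵢ ^ aᵢ * (1 - ∑ yᵢ) ^ b = ∏ aᵢ! * b! / (d + ∑ aᵢ + b)!` follows by induction on `d`:
integrating out the first coordinate gives a Beta integral. Exponents `δₖ + δₗ` give the average
`(1 + δₖₗ) / ((d + 1) (d + 2))` of `λₖ λₗ`, and `∫_τ = |τ| · ⨍_τ`.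
-/

open MeasureTheory Set
open scoped Nat ENNReal

def cornerSimplex (d : ℕ) : Set (Fin d → ℝ) := {y | (∀ i, 0 ≤ y i) ∧ ∑ i, y i ≤ 1}

def cornerBary {k : Type*} [Ring k] {d : ℕ} (y : Fin d → k) : Fin (d + 1) → k :=
  Fin.cons (1 - ∑ i, y i) y

lemma sum_cornerBary {k : Type*} [Ring k] {d : ℕ} (y : Fin d → k) : ∑ i, cornerBary y i = 1 := by
  simp [cornerBary, Fin.sum_cons]

lemma mem_cornerSimplex_iff_forall_cornerBary_nonneg {d : ℕ} {y : Fin d → ℝ} :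
    y ∈ cornerSimplex d ↔ ∀ i, 0 ≤ cornerBary y i := by
  simp [cornerSimplex, cornerBary, Fin.forall_fin_succ, and_comm]

lemma isClosed_cornerSimplex (d : ℕ) : IsClosed (cornerSimplex d) := by
  simp only [cornerSimplex, ofPred_and, ofPred_forall]
  exact (isClosed_iInter fun i => isClosed_le continuous_const (continuous_apply i)).inter
    (isClosed_le (by fun_prop) continuous_const)

lemma measurableSet_cornerSimplex (d : ℕ) : MeasurableSet (cornerSimplex d) :=
  (isClosed_cornerSimplex d).measurableSet

lemma cornerSimplex_subset_pi_Icc (d : ℕ) : cornerSimplex d ⊆ univ.pi fun _ => Icc 0 1 :=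
  fun _ hy i _ =>
    ⟨hy.1 i, (Finset.single_le_sum (fun j _ => hy.1 j) (Finset.mem_univ i)).trans hy.2⟩

lemma isCompact_cornerSimplex (d : ℕ) : IsCompact (cornerSimplex d) :=
  (isCompact_univ_pi fun _ => isCompact_Icc).of_isClosed_subset (isClosed_cornerSimplex d)
    (cornerSimplex_subset_pi_Icc d)

lemma cons_mem_cornerSimplex_succ_iff {d : ℕ} {t : ℝ} {z : Fin d → ℝ} :
    Fin.cons t z ∈ cornerSimplex (d + 1) ↔ z ∈ cornerSimplex d ∧ t ∈ Icc 0 (1 - ∑ i, z i) := by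
  simp only [cornerSimplex, mem_ofPred_eq, Fin.forall_fin_succ, Fin.cons_zero, Fin.cons_succ,
    Fin.sum_cons, mem_Icc]
  constructor
  · rintro ⟨⟨ht, hz⟩, hsum⟩
    exact ⟨⟨hz, by linarith⟩, ht, by linarith⟩
  · rintro ⟨⟨hz, -⟩, ht, hsum⟩
    exact ⟨⟨ht, hz⟩, by linarith⟩

theorem integral_pow_mul_one_sub_pow (c b : ℕ) :
    ∫ t in (0 : ℝ)..1, t ^ c * (1 - t) ^ b = (c ! * b ! : ℝ) / (c + b + 1)! := by
  have hβ := Complex.betaIntegral_eq_Gamma_mul_div (c + 1) (b + 1)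
    (by simpa using c.cast_add_one_pos) (by simpa using b.cast_add_one_pos)
  rw [show (c + 1 : ℂ) + (b + 1) = ((c + b + 1 : ℕ) : ℂ) + 1 by push_cast; ring,
    Complex.Gamma_nat_eq_factorial, Complex.Gamma_nat_eq_factorial,
    Complex.Gamma_nat_eq_factorial, Complex.betaIntegral] at hβ
  have hreal : ∀ t : ℝ, (t : ℂ) ^ ((c : ℂ) + 1 - 1) * (1 - (t : ℂ)) ^ ((b : ℂ) + 1 - 1) =
      ((t ^ c * (1 - t) ^ b : ℝ) : ℂ) := fun t => by
    simp [Complex.cpow_natCast]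
  simp_rw [hreal, intervalIntegral.integral_ofReal] at hβ
  apply Complex.ofReal_injective
  rw [hβ]
  push_cast
  rfl

theorem integral_pow_mul_sub_pow (c b : ℕ) (s : ℝ) :
    ∫ t in (0 : ℝ)..s, t ^ c * (s - t) ^ b =
      s ^ (c + b + 1) * ((c ! * b ! : ℝ) / (c + b + 1)!) := by
  have hscale := intervalIntegral.smul_integral_comp_mul_left
    (fun t => t ^ c * (s - t) ^ b) s (a := 0) (b := 1)
  rw [mul_zero, mul_one, smul_eq_mul] at hscale
  rw [← hscale, ← integral_pow_mul_one_sub_pow, ← intervalIntegral.integral_const_mul,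
    ← intervalIntegral.integral_const_mul]
  congr 1
  ext u
  rw [← mul_one_sub, mul_pow, mul_pow]
  ring

theorem setIntegral_cornerSimplex_succ_prod_pow_mul_pow {d : ℕ} (c : ℕ) (a : Fin d → ℕ)
    (b : ℕ) :
    ∫ y in cornerSimplex (d + 1), (∏ i, y i ^ (Fin.cons c a : Fin (d + 1) → ℕ) i) *
        (1 - ∑ i, y i) ^ b =
      (c ! * b ! : ℝ) / (c + b + 1)! *
        ∫ z in cornerSimplex d, (∏ i, z i ^ a i) * (1 - ∑ i, z i) ^ (c + b + 1) := by
  set F : (Fin (d + 1) → ℝ) → ℝ := fun y =>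
    (∏ i, y i ^ (Fin.cons c a : Fin (d + 1) → ℕ) i) * (1 - ∑ i, y i) ^ b
  have hF : Integrable ((cornerSimplex (d + 1)).indicator F) :=
    (integrable_indicator_iff (measurableSet_cornerSimplex _)).2
      ((by fun_prop : Continuous F).continuousOn.integrableOn_compact (isCompact_cornerSimplex _))
  have hcons := (volume_preserving_piFinSuccAbove (fun _ : Fin (d + 1) => ℝ) 0).symm
  have hcons_apply : ∀ p : ℝ × (Fin d → ℝ),
      (MeasurableEquiv.piFinSuccAbove (fun _ : Fin (d + 1) => ℝ) 0).symm p = Fin.cons p.1 p.2 :=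
    fun p => by
      simp [MeasurableEquiv.piFinSuccAbove_symm_apply, Fin.insertNthEquiv, Fin.insertNth_zero']
  have hslice : ∀ z, ∫ t, (cornerSimplex (d + 1)).indicator F (Fin.cons t z) =
      (cornerSimplex d).indicator (fun z => (c ! * b ! : ℝ) / (c + b + 1)! *
        ((∏ i, z i ^ a i) * (1 - ∑ i, z i) ^ (c + b + 1))) z := by
    intro z
    by_cases hz : z ∈ cornerSimplex d
    · set s := 1 - ∑ i, z i
      have hFz : ∀ t, (cornerSimplex (d + 1)).indicator F (Fin.cons t z) =
          (Icc 0 s).indicator (fun t => (∏ i, z i ^ a i) * (t ^ c * (s - t) ^ b)) t := by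
        intro t
        simp only [indicator, cons_mem_cornerSimplex_succ_iff, hz, true_and]
        split_ifs
        · simp only [F, Fin.prod_univ_succ, Fin.cons_zero, Fin.cons_succ, Fin.sum_cons, s]
          ring
        · rfl
      simp_rw [hFz]
      rw [indicator_of_mem hz, integral_indicator measurableSet_Icc, integral_Icc_eq_integral_Ioc,
        ← intervalIntegral.integral_of_le (sub_nonneg.2 hz.2),
        intervalIntegral.integral_const_mul, integral_pow_mul_sub_pow]
      ring
    · simp [indicator, cons_mem_cornerSimplex_succ_iff, hz]
  calc ∫ y in cornerSimplex (d + 1), F y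
      = ∫ y, (cornerSimplex (d + 1)).indicator F y :=
        (integral_indicator (measurableSet_cornerSimplex _)).symm
    _ = ∫ p : ℝ × (Fin d → ℝ), (cornerSimplex (d + 1)).indicator F (Fin.cons p.1 p.2) := by
      simp_rw [← hcons_apply]
      exact (hcons.integral_comp' _).symm
    _ = ∫ z, ∫ t, (cornerSimplex (d + 1)).indicator F (Fin.cons t z) := by
      refine integral_prod_symm _ ?_
      simp_rw [← hcons_apply]
      exact (hcons.integrable_comp_emb (MeasurableEquiv.measurableEmbedding _)).2 hF
    _ = _ := by
      simp_rw [hslice]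
      rw [integral_indicator (measurableSet_cornerSimplex _), integral_const_mul]

theorem setIntegral_cornerSimplex_prod_pow_mul_pow {d : ℕ} (a : Fin d → ℕ) (b : ℕ) :
    ∫ y in cornerSimplex d, (∏ i, y i ^ a i) * (1 - ∑ i, y i) ^ b =
      (∏ i, ((a i)! : ℝ)) * b ! / (d + ∑ i, a i + b)! := by
  induction d generalizing b with
  | zero =>
    have : (b ! : ℝ) ≠ 0 := by positivity
    simp [cornerSimplex, measureReal_def, volume_pi, Measure.pi_empty_univ, this]
  | succ d ih =>
    obtain ⟨c, a, rfl⟩ : ∃ c a', a = Fin.cons c a' :=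
      ⟨a 0, Fin.tail a, (Fin.cons_self_tail a).symm⟩
    rw [setIntegral_cornerSimplex_succ_prod_pow_mul_pow, ih, Fin.prod_univ_succ,
      Fin.sum_univ_succ]
    simp only [Fin.cons_zero, Fin.cons_succ]
    rw [show d + ∑ i, a i + (c + b + 1) = d + 1 + (c + ∑ i, a i) + b by ring]
    have : ((c + b + 1)! : ℝ) ≠ 0 := by positivity
    field_simp

theorem setIntegral_cornerSimplex_prod_cornerBary_pow {d : ℕ} (α : Fin (d + 1) → ℕ) :
    ∫ y in cornerSimplex d, ∏ i, cornerBary y i ^ α i =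
      (∏ i, ((α i)! : ℝ)) / (d + ∑ i, α i)! := by
  obtain ⟨b, a, rfl⟩ : ∃ b a, α = Fin.cons b a :=
    ⟨α 0, Fin.tail α, (Fin.cons_self_tail α).symm⟩
  simp_rw [Fin.prod_univ_succ, Fin.sum_univ_succ, cornerBary, Fin.cons_zero, Fin.cons_succ,
    mul_comm _ (∏ x, _)]
  rw [setIntegral_cornerSimplex_prod_pow_mul_pow]
  ring_nf

theorem measureReal_cornerSimplex (d : ℕ) : volume.real (cornerSimplex d) = 1 / d ! := by
  simpa using setIntegral_cornerSimplex_prod_cornerBary_pow (d := d) 0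

lemma Fintype.prod_apply_single {ι M : Type*} [Fintype ι] [DecidableEq ι] [CommMonoid M]
    (g : ι → ℕ → M) (hg : ∀ i, g i 0 = 1) (k : ι) (n : ℕ) :
    ∏ i, g i ((Pi.single k n : ι → ℕ) i) = g k n := by
  rw [Fintype.prod_eq_single k fun i hi => by rw [Pi.single_eq_of_ne hi, hg], Pi.single_eq_same]

lemma Fintype.prod_pow_single_add_single {ι M : Type*} [Fintype ι] [DecidableEq ι]
    [CommMonoid M] (f : ι → M) (k l : ι) :
    ∏ i, f i ^ (Pi.single k 1 + Pi.single l 1 : ι → ℕ) i = f k * f l := by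
  simp only [Pi.add_apply, pow_add, Finset.prod_mul_distrib]
  rw [prod_apply_single (fun i n => f i ^ n) (fun _ => pow_zero _),
    prod_apply_single (fun i n => f i ^ n) (fun _ => pow_zero _), pow_one, pow_one]

lemma Fintype.prod_factorial_single_add_single {ι : Type*} [Fintype ι] [DecidableEq ι]
    (k l : ι) :
    ∏ i, (((Pi.single k 1 + Pi.single l 1 : ι → ℕ) i)! : ℝ) = 1 + if k = l then 1 else 0 := by
  split_ifs with hkl
  · subst hkl
    rw [← Pi.single_add, prod_apply_single (fun _ n => (n ! : ℝ)) (fun _ => by simp)]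
    norm_num
  · rw [add_zero]
    refine Finset.prod_eq_one fun i _ => ?_
    simp only [Pi.add_apply, Pi.single_apply]
    split_ifs <;> simp_all

theorem setAverage_cornerBary_mul {d : ℕ} (k l : Fin (d + 1)) :
    ⨍ y in cornerSimplex d, cornerBary y k * cornerBary y l =
      (1 + if k = l then 1 else 0) / ((d + 1) * (d + 2)) := by
  have hint := setIntegral_cornerSimplex_prod_cornerBary_pow (Pi.single k 1 + Pi.single l 1)
  have hsum : ∑ i, (Pi.single k 1 + Pi.single l 1 : Fin (d + 1) → ℕ) i = 2 := by
    simp [Finset.sum_add_distrib]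
  simp only [Fintype.prod_pow_single_add_single, Fintype.prod_factorial_single_add_single,
    hsum] at hint
  rw [setAverage_eq, hint, measureReal_cornerSimplex,
    show ((d + 2)! : ℝ) = (d + 1) * (d + 2) * (d ! : ℝ) by
      push_cast [Nat.factorial_succ]; ring,
    smul_eq_mul]
  field_simp

theorem MeasureTheory.average_smul_measure {α G : Type*} [MeasurableSpace α]
    [NormedAddCommGroup G] [NormedSpace ℝ G] (μ : Measure α) (f : α → G) {c : ℝ≥0∞}
    (hc₀ : c ≠ 0) (hc : c ≠ ∞) : ⨍ x, f x ∂(c • μ) = ⨍ x, f x ∂μ := by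
  rw [average_eq', average_eq', Measure.smul_apply, smul_eq_mul,
    ENNReal.mul_inv (.inl hc₀) (.inl hc), smul_smul, mul_right_comm,
    ENNReal.inv_mul_cancel hc₀ hc, one_mul]

theorem MeasurableEquiv.setAverage_map {α β G : Type*} [MeasurableSpace α] [MeasurableSpace β]
    [NormedAddCommGroup G] [NormedSpace ℝ G] (μ : Measure α) (e : α ≃ᵐ β) (g : β → G)
    (s : Set β) : ⨍ y in s, g y ∂μ.map e = ⨍ x in e ⁻¹' s, g (e x) ∂μ := by
  rw [setAverage_eq, setAverage_eq, setIntegral_map_equiv, measureReal_def, measureReal_def,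
    e.map_apply]

section AffineInvariance

variable {E F G : Type*} [NormedAddCommGroup E] [NormedSpace ℝ E] [FiniteDimensional ℝ E]
  [MeasurableSpace E] [BorelSpace E] [NormedAddCommGroup F] [NormedSpace ℝ F]
  [MeasurableSpace F] [BorelSpace F]

theorem MeasureTheory.Measure.map_affineEquiv_eq_map_linear (μ : Measure E)
    [μ.IsAddHaarMeasure] (Φ : E ≃ᵃ[ℝ] F) : μ.map Φ = μ.map Φ.linear := by
  have hL : Measurable Φ.linear := Φ.linear.toLinearMap.continuous_of_finiteDimensional.measurable
  have hΦ : ⇑Φ = (· + Φ 0) ∘ Φ.linear := AffineMap.decomp Φ.toAffineMap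
  have : (μ.map Φ.linear).IsAddHaarMeasure :=
    Φ.linear.toContinuousLinearEquiv.isAddHaarMeasure_map μ
  rw [hΦ, ← Measure.map_map (measurable_add_const _) hL, map_add_right_eq_self]

variable [FiniteDimensional ℝ F] [NormedAddCommGroup G] [NormedSpace ℝ G]

theorem setAverage_comp_affineEquiv (μ : Measure E) [μ.IsAddHaarMeasure] (ν : Measure F)
    [ν.IsAddHaarMeasure] (Φ : E ≃ᵃ[ℝ] F) (g : F → G) (s : Set F) :
    ⨍ y in Φ ⁻¹' s, g (Φ y) ∂μ = ⨍ z in s, g z ∂ν := by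
  let e : E ≃ᵐ F := Homeomorph.toMeasurableEquiv
    { Φ.toEquiv with
      continuous_toFun := Φ.toAffineMap.continuous_of_finiteDimensional
      continuous_invFun := Φ.symm.toAffineMap.continuous_of_finiteDimensional }
  have : (μ.map Φ).IsAddHaarMeasure := by
    rw [Measure.map_affineEquiv_eq_map_linear]
    exact Φ.linear.toContinuousLinearEquiv.isAddHaarMeasure_map μ
  have hc := Measure.isAddLeftInvariant_eq_smul (μ.map Φ) ν
  rw [show ⨍ y in Φ ⁻¹' s, g (Φ y) ∂μ = ⨍ z in s, g z ∂μ.map Φ from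
    (e.setAverage_map μ g s).symm, hc, Measure.restrict_smul, ← Measure.coe_nnreal_smul,
    average_smul_measure _ _ (by simpa using
      (Measure.addHaarScalarFactor_pos_of_isAddHaarMeasure (μ.map Φ) ν).ne') ENNReal.coe_ne_top]

end AffineInvariance

section AffineBasis

variable {k V P : Type*} [Ring k] [AddCommGroup V] [Module k V] [AddTorsor V P] {d : ℕ}

noncomputable def AffineBasis.cornerChart (b : AffineBasis (Fin (d + 1)) k P) :
    P →ᵃ[k] Fin d → k :=
  AffineMap.pi fun i => b.coord i.succ

lemma AffineBasis.cornerBary_cornerChart (b : AffineBasis (Fin (d + 1)) k P) (p : P) :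
    cornerBary (b.cornerChart p) = fun i => b.coord i p := by
  ext i
  cases i using Fin.cases with
  | zero =>
    rw [cornerBary, Fin.cons_zero, ← b.sum_coord_apply_eq_one p, Fin.sum_univ_succ]
    simp [cornerChart]
  | succ i => simp [cornerBary, cornerChart]

lemma AffineBasis.cornerChart_bijective (b : AffineBasis (Fin (d + 1)) k P) :
    Function.Bijective b.cornerChart := by
  refine ⟨fun p q h => b.ext_elem fun i => ?_,
    fun z => ⟨Finset.univ.affineCombination k b (cornerBary z), ?_⟩⟩
  · simpa [b.cornerBary_cornerChart] using congrFun (congrArg cornerBary h) i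
  · ext i
    simp only [cornerChart, AffineMap.pi_apply,
      b.coord_apply_combination_of_mem (Finset.mem_univ _) (sum_cornerBary z)]
    rfl

end AffineBasis

lemma AffineBasis.convexHull_eq_preimage_cornerSimplex {V : Type*} [AddCommGroup V]
    [Module ℝ V] {d : ℕ} (b : AffineBasis (Fin (d + 1)) ℝ V) :
    convexHull ℝ (range b) = b.cornerChart ⁻¹' cornerSimplex d := by
  ext p
  simp [b.convexHull_eq_nonneg_coord, mem_cornerSimplex_iff_forall_cornerBary_nonneg,
    b.cornerBary_cornerChart]

theorem barycentric_mass_matrix_general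
    (d : ℕ)
    (x : Fin (d + 1) → EuclideanSpace ℝ (Fin d))
    (hx : AffineIndependent ℝ x)
    (τ : Set (EuclideanSpace ℝ (Fin d)))
    (hτ : τ = convexHull ℝ (Set.range x))
    (lam : Fin (d + 1) → (EuclideanSpace ℝ (Fin d) →ᵃ[ℝ] ℝ))
    (hlam : ∀ i j, lam i (x j) = if i = j then 1 else 0)
    (k l : Fin (d + 1)) :
    ∫ y in τ, lam k y * lam l y =
      (volume τ).toReal * (1 + if k = l then (1 : ℝ) else 0) /
        (((d : ℝ) + 1) * ((d : ℝ) + 2)) := by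
  have hspan : affineSpan ℝ (range x) = ⊤ :=
    hx.affineSpan_eq_top_iff_card_eq_finrank_add_one.2 (by simp)
  let b : AffineBasis (Fin (d + 1)) ℝ (EuclideanSpace ℝ (Fin d)) := ⟨x, hx, hspan⟩
  obtain rfl : lam = b.coord := funext fun i => AffineMap.ext_on hspan <| by
    rintro _ ⟨j, rfl⟩
    exact (hlam i j).trans (b.coord_apply i j).symm
  have hfin : volume τ ≠ ⊤ := by
    rw [hτ]
    exact ((finite_range x).isCompact_convexHull ℝ).measure_lt_top.ne
  set Φ := AffineEquiv.ofBijective b.cornerChart_bijective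
  have hτΦ : τ = Φ ⁻¹' cornerSimplex d := hτ.trans b.convexHull_eq_preimage_cornerSimplex
  have hcoord : ∀ i p, b.coord i p = cornerBary (Φ p) i := fun i p =>
    (congrFun (b.cornerBary_cornerChart p) i).symm
  rw [← measure_smul_setAverage _ hfin, hτΦ]
  simp_rw [hcoord]
  rw [setAverage_comp_affineEquiv volume volume Φ (fun z => cornerBary z k * cornerBary z l),
    setAverage_cornerBary_mul, smul_eq_mul, measureReal_def, mul_div_assoc]

/-- For the barycentric coordinate functions `λ_1, …, λ_{d+1}` of a
nondegenerate `d`-simplex `τ` in `ℝ^d` (the unique affine functions with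
`λ_i(x_j) = δ_{ij}`), one has `∫_τ λ_k λ_l = |τ| (1 + δ_{kl}) / ((d+1)(d+2))`. -/
theorem barycentric_mass_matrix
    (d : ℕ) (hd : 1 ≤ d)
    (x : Fin (d + 1) → EuclideanSpace ℝ (Fin d))
    (hx : AffineIndependent ℝ x)
    (τ : Set (EuclideanSpace ℝ (Fin d)))
    (hτ : τ = convexHull ℝ (Set.range x))
    (lam : Fin (d + 1) → (EuclideanSpace ℝ (Fin d) →ᵃ[ℝ] ℝ))
    (hlam : ∀ i j, lam i (x j) = if i = j then 1 else 0)
    (k l : Fin (d + 1)) :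
    ∫ y in τ, lam k y * lam l y =
      (volume τ).toReal * (1 + if k = l then (1 : ℝ) else 0) /
        (((d : ℝ) + 1) * ((d : ℝ) + 2)) :=
  barycentric_mass_matrix_general d x hx τ hτ lam hlam k l
end

section
/- Let d ≥ 1, let x_1, …, x_{d+1} ∈ ℝ^d be affinely independent, let τ be their closed convex hull, and let λ_1, …, λ_{d+1} be the barycentric coordinate functions of the simplex. Then the restrictions of λ_1, …, λ_{d+1} to τ are linearly independent in L²(τ), and there exists a unique family of affine functions ψ_1, …, ψ_{d+1} : ℝ^d → ℝ that is biorthogonal to the barycentric coordinates on τ: ∫_τ λ_k(x) ψ_l(x) dx = δ_{kl} for all k, l ∈ {1, …, d+1}. -/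
/-!
On the `(d+1)`-dimensional space of affine functions, `ψ ↦ (∫_τ λ_k ψ)_k` is injective: if all
these moments vanish then, expanding `ψ = ∑ ψ(x_k) λ_k`, also `∫_τ ψ² = 0`, so the continuous
function `ψ` vanishes on `τ`, which is the closure of its interior, hence at every vertex, hence
everywhere. Being an injective linear map between spaces of equal dimension, it is bijective, and
the biorthogonal family is the preimage of the standard basis. The same closure argument gives the
linear independence of the `λ_k` in `L²(τ)`.
-/

open MeasureTheory Module

theorem LinearMap.existsUnique_biorthogonal {K V ι : Type*} [Field K] [AddCommGroup V]
    [Module K V] [FiniteDimensional K V] [Fintype ι] [DecidableEq ι] (Φ : V →ₗ[K] ι → K)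
    (hΦ : Function.Injective Φ) (hdim : finrank K V = Fintype.card ι) :
    ∃! ψ : ι → V, ∀ k l, Φ (ψ l) k = if k = l then 1 else 0 := by
  let e := Φ.linearEquivOfInjective hΦ (by rw [hdim, finrank_fintype_fun_eq_card])
  have he : ∀ v, e v = Φ v := fun _ => rfl
  refine ⟨fun l => e.symm (Pi.single l 1), fun k l => ?_, fun ψ hψ => funext fun l => ?_⟩
  · rw [← he, e.apply_symm_apply, Pi.single_apply]
  · rw [e.eq_symm_apply, he]
    funext k
    rw [hψ k l, Pi.single_apply]

namespace AffineBasis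

variable {ι k V P : Type*} [Ring k] [AddCommGroup V] [Module k V] [AddTorsor V P]

theorem affineMap_ext {V₂ P₂ : Type*} [AddCommGroup V₂] [Module k V₂] [AddTorsor V₂ P₂]
    (b : AffineBasis ι k P) {f g : P →ᵃ[k] P₂} (h : ∀ i, f (b i) = g (b i)) : f = g :=
  AffineMap.ext_on b.tot (by rintro _ ⟨i, rfl⟩; exact h i)

theorem sum_mul_coord_apply [Fintype ι] [DecidableEq ι] (b : AffineBasis ι k P) (u : ι → k)
    (j : ι) : ∑ i, u i * b.coord i (b j) = u j := by
  simp [b.coord_apply]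

theorem apply_eq_sum_coord_smul [Fintype ι] {V₂ : Type*} [AddCommGroup V₂] [Module k V₂]
    (b : AffineBasis ι k P) (f : P →ᵃ[k] V₂) (q : P) : f q = ∑ i, b.coord i q • f (b i) :=
  calc f q = f (Finset.univ.affineCombination k b fun i => b.coord i q) := by
        rw [b.affineCombination_coord_eq_self]
    _ = Finset.univ.affineCombination k (f ∘ b) fun i => b.coord i q :=
        Finset.map_affineCombination _ _ _ (b.sum_coord_apply_eq_one q) f
    _ = ∑ i, b.coord i q • f (b i) :=
        Finset.affineCombination_eq_linear_combination _ _ _ (b.sum_coord_apply_eq_one q)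

end AffineBasis

section Moments

variable {E : Type*} [NormedAddCommGroup E] [NormedSpace ℝ E] [FiniteDimensional ℝ E]
  [MeasurableSpace E] [BorelSpace E] {μ : Measure E} {s : Set E} {ι : Type*}

theorem AffineMap.integrableOn_mul [IsFiniteMeasureOnCompacts μ] (hs : IsCompact s)
    (f g : E →ᵃ[ℝ] ℝ) : IntegrableOn (fun y => f y * g y) s μ :=
  (f.continuous_of_finiteDimensional.mul g.continuous_of_finiteDimensional).continuousOn
    |>.integrableOn_compact hs

variable (μ) in
noncomputable def affineMoments [IsFiniteMeasureOnCompacts μ] (hs : IsCompact s)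
    (φ : ι → E →ᵃ[ℝ] ℝ) : (E →ᵃ[ℝ] ℝ) →ₗ[ℝ] ι → ℝ where
  toFun ψ k := ∫ y in s, φ k y * ψ y ∂μ
  map_add' ψ ψ' := funext fun k => by
    simp only [AffineMap.coe_add, Pi.add_apply, mul_add]
    exact integral_add ((φ k).integrableOn_mul hs ψ) ((φ k).integrableOn_mul hs ψ')
  map_smul' c ψ := funext fun k => by
    simp only [AffineMap.coe_smul, Pi.smul_apply, smul_eq_mul, RingHom.id_apply, mul_left_comm _ c,
      integral_const_mul]

theorem affineMoments_apply [IsFiniteMeasureOnCompacts μ] (hs : IsCompact s)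
    (φ : ι → E →ᵃ[ℝ] ℝ) (ψ : E →ᵃ[ℝ] ℝ) (k : ι) :
    affineMoments μ hs φ ψ k = ∫ y in s, φ k y * ψ y ∂μ :=
  rfl

theorem AffineMap.eqOn_zero_of_integral_mul_self_eq_zero [IsFiniteMeasureOnCompacts μ]
    [μ.IsOpenPosMeasure] (hs : IsCompact s) (hs' : s ⊆ closure (interior s)) (ψ : E →ᵃ[ℝ] ℝ)
    (h : ∫ y in s, ψ y * ψ y ∂μ = 0) : Set.EqOn ψ 0 s := by
  have hsq : (fun y => ψ y * ψ y) =ᵐ[μ.restrict s] 0 :=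
    (integral_eq_zero_iff_of_nonneg (fun y => mul_self_nonneg (ψ y))
      (ψ.integrableOn_mul hs ψ)).mp h
  have hψ : ⇑ψ =ᵐ[μ.restrict s] 0 := hsq.mono fun y hy => mul_self_eq_zero.mp hy
  exact Measure.eqOn_of_ae_eq hψ ψ.continuous_of_finiteDimensional.continuousOn
    continuousOn_const hs'

theorem AffineBasis.affineMoments_coord_injective [Fintype ι] [IsFiniteMeasureOnCompacts μ]
    [μ.IsOpenPosMeasure] (b : AffineBasis ι ℝ E) (hs : IsCompact s)
    (hs' : s ⊆ closure (interior s)) (hb : ∀ i, b i ∈ s) :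
    Function.Injective (affineMoments μ hs b.coord) := by
  refine (injective_iff_map_eq_zero _).mpr fun ψ hψ => b.affineMap_ext fun j => ?_
  have hsq : ∫ y in s, ψ y * ψ y ∂μ = 0 :=
    calc ∫ y in s, ψ y * ψ y ∂μ = ∫ y in s, ∑ i, ψ (b i) * (b.coord i y * ψ y) ∂μ := by
          congr 1 with y
          rw [b.apply_eq_sum_coord_smul ψ y, Finset.sum_mul]
          exact Finset.sum_congr rfl fun i _ => by rw [smul_eq_mul]; ring
      _ = ∑ i, ψ (b i) * affineMoments μ hs b.coord ψ i := by
          rw [integral_finsetSum _ fun i _ => ((b.coord i).integrableOn_mul hs ψ).const_mul _]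
          simp only [integral_const_mul, affineMoments_apply]
      _ = 0 := by simp [hψ]
  exact ψ.eqOn_zero_of_integral_mul_self_eq_zero hs hs' hsq (hb j)

theorem AffineBasis.existsUnique_biorthogonal [Fintype ι] [DecidableEq ι] [IsFiniteMeasureOnCompacts μ]
    [μ.IsOpenPosMeasure] (b : AffineBasis ι ℝ E) (hs : IsCompact s)
    (hs' : s ⊆ closure (interior s)) (hb : ∀ i, b i ∈ s) :
    ∃! ψ : ι → E →ᵃ[ℝ] ℝ, ∀ k l, ∫ y in s, b.coord k y * ψ l y ∂μ = if k = l then 1 else 0 :=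
  (affineMoments μ hs b.coord).existsUnique_biorthogonal
    (b.affineMoments_coord_injective hs hs' hb)
    (by rw [AffineMap.finrank_eq, finrank_self, mul_one, b.card_eq_finrank_add_one])

end Moments

theorem AffineBasis.convexHull_subset_closure_interior {E : Type*} [NormedAddCommGroup E]
    [NormedSpace ℝ E] [FiniteDimensional ℝ E] {ι : Type*} (b : AffineBasis ι ℝ E) :
    convexHull ℝ (Set.range b) ⊆ closure (interior (convexHull ℝ (Set.range b))) := by
  rw [(convex_convexHull ℝ _).closure_interior_eq_closure_of_nonempty_interior
    (interior_convexHull_nonempty_iff_affineSpan_eq_top.mpr b.tot)]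
  exact subset_closure

theorem barycentric_biorthogonal_family_general
    (d : ℕ)
    (x : Fin (d + 1) → EuclideanSpace ℝ (Fin d))
    (hx : AffineIndependent ℝ x)
    (τ : Set (EuclideanSpace ℝ (Fin d)))
    (hτ : τ = convexHull ℝ (Set.range x))
    (lam : Fin (d + 1) → (EuclideanSpace ℝ (Fin d) →ᵃ[ℝ] ℝ))
    (hlam : ∀ i j, lam i (x j) = if i = j then 1 else 0) :
    (∀ u : Fin (d + 1) → ℝ,
        (∀ᵐ y ∂(volume.restrict τ), ∑ i, u i * lam i y = 0) → u = 0) ∧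
      (∃! ψ : Fin (d + 1) → (EuclideanSpace ℝ (Fin d) →ᵃ[ℝ] ℝ),
        ∀ k l, (∫ y in τ, lam k y * ψ l y) = if k = l then (1 : ℝ) else 0) := by
  let b : AffineBasis (Fin (d + 1)) ℝ (EuclideanSpace ℝ (Fin d)) :=
    ⟨x, hx, by rw [hx.affineSpan_eq_top_iff_card_eq_finrank_add_one]; simp⟩
  obtain rfl : lam = b.coord :=
    funext fun i => b.affineMap_ext fun j => (hlam i j).trans (b.coord_apply i j).symm
  subst hτ
  have hcompact : IsCompact (convexHull ℝ (Set.range x)) :=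
    (Set.finite_range x).isCompact_convexHull ℝ
  have hvertex : ∀ j, b j ∈ convexHull ℝ (Set.range x) :=
    fun j => subset_convexHull ℝ _ (Set.mem_range_self j)
  refine ⟨fun u hu => funext fun j => ?_,
    b.existsUnique_biorthogonal hcompact b.convexHull_subset_closure_interior hvertex⟩
  rw [← b.sum_mul_coord_apply u j]
  have hcont : Continuous fun y => ∑ i, u i * b.coord i y :=
    continuous_finsetSum _ fun i _ => (b.coord i).continuous_of_finiteDimensional.const_mul _
  exact Measure.eqOn_of_ae_eq hu hcont.continuousOn continuousOn_const
    b.convexHull_subset_closure_interior (hvertex j)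

/-- The restrictions of the barycentric coordinate functions of a
nondegenerate `d`-simplex `τ` to `τ` are linearly independent in `L²(τ)`
(i.e. any linear combination vanishing a.e. on `τ` has zero coefficients), and
there is a unique family of affine functions `ψ_1, …, ψ_{d+1}` biorthogonal to
the barycentric coordinates on `τ`: `∫_τ λ_k ψ_l = δ_{kl}`. -/
theorem barycentric_biorthogonal_family
    (d : ℕ) (hd : 1 ≤ d)
    (x : Fin (d + 1) → EuclideanSpace ℝ (Fin d))
    (hx : AffineIndependent ℝ x)
    (τ : Set (EuclideanSpace ℝ (Fin d)))
    (hτ : τ = convexHull ℝ (Set.range x))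
    (lam : Fin (d + 1) → (EuclideanSpace ℝ (Fin d) →ᵃ[ℝ] ℝ))
    (hlam : ∀ i j, lam i (x j) = if i = j then 1 else 0) :
    (∀ u : Fin (d + 1) → ℝ,
        (∀ᵐ y ∂(volume.restrict τ), ∑ i, u i * lam i y = 0) → u = 0) ∧
      (∃! ψ : Fin (d + 1) → (EuclideanSpace ℝ (Fin d) →ᵃ[ℝ] ℝ),
        ∀ k l, (∫ y in τ, lam k y * ψ l y) = if k = l then (1 : ℝ) else 0) :=
  barycentric_biorthogonal_family_general d x hx τ hτ lam hlam
end

section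
/- Let a, b, c, d ∈ ℝ³ be affinely independent and let τ = conv{a,b,c,d}. Then the convex hull of the six edge midpoints, Ω = conv{(a+b)/2, (a+c)/2, (a+d)/2, (b+c)/2, (b+d)/2, (c+d)/2} (the interior octahedron of regular refinement), has Lebesgue volume vol(Ω) = (1/2)·vol(τ). -/
/-!
In barycentric coordinates `x = ∑ xᵢ • vᵢ` with respect to the tetrahedron's vertices, the
tetrahedron is `{x | ∀ i, 0 ≤ xᵢ}`, the corner at `vᵢ` is the part where `1/2 ≤ xᵢ`, and the
convex hull of the edge midpoints is the part where every `xᵢ ≤ 1/2`. These five pieces cover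
the tetrahedron and overlap only in the null hyperplanes `xᵢ = 1/2`. Each corner is the image of
the tetrahedron under the homothety of ratio `1/2` centred at its vertex, so it has `1/8` of the
volume; hence the octahedron has `1 - 4/8 = 1/2` of it.
-/

open MeasureTheory Set Module Function
open scoped ENNReal

section Octahedron

variable {V : Type*} [AddCommGroup V] [Module ℝ V]

theorem smul_midpoints_mem_convexHull (a b c d : V) {l₁ l₂ l₃ l₄ l₅ l₆ : ℝ}
    (h₁ : 0 ≤ l₁) (h₂ : 0 ≤ l₂) (h₃ : 0 ≤ l₃) (h₄ : 0 ≤ l₄) (h₅ : 0 ≤ l₅) (h₆ : 0 ≤ l₆)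
    (hl : l₁ + l₂ + l₃ + l₄ + l₅ + l₆ = 1) :
    l₁ • midpoint ℝ a b + l₂ • midpoint ℝ a c + l₃ • midpoint ℝ a d +
        l₄ • midpoint ℝ b c + l₅ • midpoint ℝ b d + l₆ • midpoint ℝ c d ∈
      convexHull ℝ {midpoint ℝ a b, midpoint ℝ a c, midpoint ℝ a d,
        midpoint ℝ b c, midpoint ℝ b d, midpoint ℝ c d} := by
  have := (convex_convexHull ℝ {midpoint ℝ a b, midpoint ℝ a c, midpoint ℝ a d,
        midpoint ℝ b c, midpoint ℝ b d, midpoint ℝ c d}).sum_mem (t := Finset.univ)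
    (w := ![l₁, l₂, l₃, l₄, l₅, l₆])
    (z := ![midpoint ℝ a b, midpoint ℝ a c, midpoint ℝ a d,
        midpoint ℝ b c, midpoint ℝ b d, midpoint ℝ c d])
    (fun i _ => by fin_cases i <;> assumption) (by simpa [Fin.sum_univ_six] using hl)
    (fun i _ => subset_convexHull ℝ _ (by fin_cases i <;> simp))
  simpa [Fin.sum_univ_six] using this

/-- The octahedron is the union of the four tetrahedra around its diagonal from the midpoint of
`ac` to that of `bd`; the case split locates the point in one of them. -/
theorem smul_add_smul_mem_convexHull_midpoints (a b c d : V) {α β γ δ : ℝ}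
    (hα : α ∈ Icc 0 2⁻¹) (hβ : β ∈ Icc 0 2⁻¹) (hγ : γ ∈ Icc 0 2⁻¹) (hδ : δ ∈ Icc 0 2⁻¹)
    (hsum : α + β + γ + δ = 1) :
    α • a + β • b + γ • c + δ • d ∈
      convexHull ℝ {midpoint ℝ a b, midpoint ℝ a c, midpoint ℝ a d,
        midpoint ℝ b c, midpoint ℝ b d, midpoint ℝ c d} := by
  obtain ⟨hα₀, hα₁⟩ := hα
  obtain ⟨hβ₀, hβ₁⟩ := hβ
  obtain ⟨hγ₀, hγ₁⟩ := hγ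
  obtain ⟨hδ₀, hδ₁⟩ := hδ
  rcases le_total 2⁻¹ (α + β) with hab | hab <;> rcases le_total (β + γ) 2⁻¹ with hbc | hbc
  · convert smul_midpoints_mem_convexHull a b c d (l₁ := 2 * α + 2 * β - 1) (l₂ := 2 * γ)
      (l₃ := 1 - 2 * β - 2 * γ) (l₄ := 0) (l₅ := 1 - 2 * α) (l₆ := 0) (by linarith) (by linarith)
      (by linarith) le_rfl (by linarith) le_rfl (by ring) using 1
    simp only [midpoint_eq_smul_add, invOf_eq_inv]; match_scalars <;> linarith
  · convert smul_midpoints_mem_convexHull a b c d (l₁ := 2 * α + 2 * β - 1) (l₂ := 1 - 2 * β)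
      (l₃ := 0) (l₄ := 2 * β + 2 * γ - 1) (l₅ := 2 * δ) (l₆ := 0) (by linarith) (by linarith)
      le_rfl (by linarith) (by linarith) le_rfl (by linarith) using 1
    simp only [midpoint_eq_smul_add, invOf_eq_inv]; match_scalars <;> linarith
  · convert smul_midpoints_mem_convexHull a b c d (l₁ := 0) (l₂ := 1 - 2 * δ)
      (l₃ := 2 * α + 2 * δ - 1) (l₄ := 0) (l₅ := 2 * β) (l₆ := 2 * γ + 2 * δ - 1) le_rfl
      (by linarith) (by linarith) le_rfl (by linarith) (by linarith) (by linarith) using 1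
    simp only [midpoint_eq_smul_add, invOf_eq_inv]; match_scalars <;> linarith
  · convert smul_midpoints_mem_convexHull a b c d (l₁ := 0) (l₂ := 2 * α)
      (l₃ := 0) (l₄ := 1 - 2 * δ - 2 * α) (l₅ := 1 - 2 * γ) (l₆ := 2 * γ + 2 * δ - 1) le_rfl
      (by linarith) le_rfl (by linarith) (by linarith) (by linarith) (by linarith) using 1
    simp only [midpoint_eq_smul_add, invOf_eq_inv]; match_scalars <;> linarith

end Octahedron

namespace AffineBasis

section Coordinates

variable {ι V : Type*} [AddCommGroup V] [Module ℝ V] (B : AffineBasis ι ℝ V)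

/-- For a tetrahedron this is the octahedron spanned by the edge midpoints; in general it is the
second hypersimplex, scaled by `1/2`. -/
def hypersimplex : Set V := ⋂ i, B.coord i ⁻¹' Icc 0 2⁻¹

def corner (i : ι) : Set V := (⋂ j, B.coord j ⁻¹' Ici 0) ∩ B.coord i ⁻¹' Ici 2⁻¹

@[simp]
theorem mem_hypersimplex {x : V} : x ∈ B.hypersimplex ↔ ∀ i, B.coord i x ∈ Icc 0 2⁻¹ := by
  simp [hypersimplex]

@[simp]
theorem mem_corner {i : ι} {x : V} :
    x ∈ B.corner i ↔ (∀ j, 0 ≤ B.coord j x) ∧ 2⁻¹ ≤ B.coord i x := by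
  simp [corner]

theorem convex_hypersimplex : Convex ℝ B.hypersimplex :=
  convex_iInter fun i => (convex_Icc _ _).affine_preimage (B.coord i)

theorem midpoint_mem_hypersimplex {j k : ι} (hjk : j ≠ k) :
    midpoint ℝ (B j) (B k) ∈ B.hypersimplex := by
  classical
  refine B.mem_hypersimplex.2 fun i => ?_
  rw [(B.coord i).map_midpoint, B.coord_apply, B.coord_apply,
    midpoint_eq_smul_add, invOf_eq_inv, smul_eq_mul]
  by_cases hij : i = j
  · subst hij; norm_num [hjk]
  · by_cases hik : i = k
    · subst hik; norm_num [hij]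
    · norm_num [hij, hik]

theorem coord_add_coord_le_one [Fintype ι] {x : V} (hx : ∀ k, 0 ≤ B.coord k x) {i j : ι}
    (hij : i ≠ j) : B.coord i x + B.coord j x ≤ 1 := by
  classical
  calc B.coord i x + B.coord j x = ∑ k ∈ {i, j}, B.coord k x := by rw [Finset.sum_pair hij]
    _ ≤ ∑ k, B.coord k x :=
      Finset.sum_le_sum_of_subset_of_nonneg (Finset.subset_univ _) fun k _ _ => hx k
    _ = 1 := B.sum_coord_apply_eq_one x

theorem coord_homothety [DecidableEq ι] (i j : ι) (r : ℝ) (x : V) :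
    B.coord j (AffineMap.homothety (B i) r x) =
      (1 - r) * (if j = i then 1 else 0) + r * B.coord j x := by
  rw [AffineMap.homothety_eq_lineMap, AffineMap.apply_lineMap, B.coord_apply,
    AffineMap.lineMap_apply_module']
  ring

theorem homothety_image_convexHull (i : ι) :
    AffineMap.homothety (B i) (2⁻¹ : ℝ) '' convexHull ℝ (range B) = B.corner i := by
  classical
  rw [B.convexHull_eq_nonneg_coord]
  ext y
  simp only [mem_corner, mem_image, mem_ofPred_eq]
  constructor
  · rintro ⟨x, hx, rfl⟩
    refine ⟨fun j => ?_, ?_⟩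
    · rw [coord_homothety]; have := hx j; split_ifs <;> linarith
    · rw [coord_homothety, if_pos rfl]; linarith [hx i]
  · rintro ⟨hy, hyi⟩
    refine ⟨AffineMap.homothety (B i) (2 : ℝ) y, fun j => ?_, ?_⟩
    · rw [coord_homothety]
      by_cases hji : j = i
      · subst hji; rw [if_pos rfl]; linarith
      · rw [if_neg hji]; linarith [hy j]
    · rw [← AffineMap.homothety_mul_apply, inv_mul_cancel₀ two_ne_zero,
        AffineMap.homothety_one, AffineMap.id_apply]

theorem convexHull_midpoints_eq_hypersimplex (B : AffineBasis (Fin 4) ℝ V) :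
    convexHull ℝ {midpoint ℝ (B 0) (B 1), midpoint ℝ (B 0) (B 2), midpoint ℝ (B 0) (B 3),
      midpoint ℝ (B 1) (B 2), midpoint ℝ (B 1) (B 3), midpoint ℝ (B 2) (B 3)} =
      B.hypersimplex := by
  refine (convexHull_min ?_ B.convex_hypersimplex).antisymm fun x hx => ?_
  · rintro _ (rfl | rfl | rfl | rfl | rfl | rfl) <;> exact B.midpoint_mem_hypersimplex (by decide)
  · rw [mem_hypersimplex] at hx
    have hcomb := B.linear_combination_coord_eq_self x
    have hsum := B.sum_coord_apply_eq_one x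
    rw [Fin.sum_univ_four] at hcomb hsum
    rw [← hcomb]
    exact smul_add_smul_mem_convexHull_midpoints _ _ _ _ (hx 0) (hx 1) (hx 2) (hx 3) hsum

end Coordinates

section Measure

variable {ι E : Type*} [NormedAddCommGroup E] [NormedSpace ℝ E]
  [FiniteDimensional ℝ E] [MeasurableSpace E] [BorelSpace E] (μ : Measure E) [μ.IsAddHaarMeasure]
  (B : AffineBasis ι ℝ E)

theorem measure_coord_preimage_singleton (i : ι) {c : ℝ} (hc : c ≠ 1) :
    μ (B.coord i ⁻¹' {c}) = 0 := by
  classical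
  let S := (AffineSubspace.mk' c ⊥).comap (B.coord i)
  have hS : (S : Set E) = B.coord i ⁻¹' {c} := by
    ext x
    simp [S, AffineSubspace.mem_mk', sub_eq_zero]
  have hBi : B i ∉ S := by
    rw [← SetLike.mem_coe, hS, mem_preimage, B.coord_apply, if_pos rfl]
    exact hc.symm
  rw [← hS]
  exact Measure.addHaar_affineSubspace μ S fun h => hBi (h ▸ AffineSubspace.mem_top ℝ E _)

theorem measure_convexHull_eq_add_sum_corner [Fintype ι] :
    μ (convexHull ℝ (range B)) = μ B.hypersimplex + ∑ i, μ (B.corner i) := by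
  have hcont : ∀ i, Continuous (B.coord i) := fun i => (B.coord i).continuous_of_finiteDimensional
  have hmeas : ∀ i, NullMeasurableSet (B.corner i) μ := fun i =>
    ((MeasurableSet.iInter fun j => (hcont j).measurable measurableSet_Ici).inter
      ((hcont i).measurable measurableSet_Ici)).nullMeasurableSet
  have hnull : μ (⋃ i, B.coord i ⁻¹' {2⁻¹}) = 0 :=
    measure_iUnion_null fun i => B.measure_coord_preimage_singleton μ i (by norm_num)
  have hcover : convexHull ℝ (range B) = B.hypersimplex ∪ ⋃ i, B.corner i := by
    ext x
    simp only [B.convexHull_eq_nonneg_coord, mem_union, mem_iUnion, mem_hypersimplex, mem_corner,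
      mem_Icc, mem_ofPred_eq]
    constructor
    · intro hx
      by_cases hbig : ∃ i, 2⁻¹ ≤ B.coord i x
      · exact Or.inr (hbig.imp fun i hi => ⟨hx, hi⟩)
      · push Not at hbig
        exact Or.inl fun i => ⟨hx i, (hbig i).le⟩
    · rintro (hx | ⟨i, hx, -⟩)
      exacts [fun i => (hx i).1, hx]
  have hdisj : AEDisjoint μ B.hypersimplex (⋃ i, B.corner i) := by
    refine measure_mono_null (fun x ⟨hx, hx'⟩ => ?_) hnull
    obtain ⟨i, hi⟩ := mem_iUnion.1 hx'
    exact mem_iUnion.2 ⟨i, le_antisymm (B.mem_hypersimplex.1 hx i).2 (B.mem_corner.1 hi).2⟩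
  have hpair : Pairwise (AEDisjoint μ on B.corner) := by
    refine fun i j hij => measure_mono_null (fun x ⟨hi, hj⟩ => mem_iUnion.2 ⟨i, ?_⟩) hnull
    rw [mem_corner] at hi hj
    have := B.coord_add_coord_le_one hi.1 hij
    exact (show B.coord i x = 2⁻¹ by linarith [hi.2, hj.2])
  rw [hcover, measure_union₀ (.iUnion hmeas) hdisj, measure_iUnion₀ hpair hmeas, tsum_fintype]

theorem measure_corner (i : ι) :
    μ (B.corner i) = 2⁻¹ ^ finrank ℝ E * μ (convexHull ℝ (range B)) := by
  rw [← homothety_image_convexHull, Measure.addHaar_image_homothety, abs_of_pos (by positivity),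
    ENNReal.ofReal_pow (by norm_num), ENNReal.ofReal_inv_of_pos two_pos, ENNReal.ofReal_ofNat]

theorem measure_hypersimplex_eq_half (B : AffineBasis (Fin 4) ℝ E) :
    μ B.hypersimplex = μ (convexHull ℝ (range B)) / 2 := by
  have hdim : finrank ℝ E = 3 := by
    have := B.card_eq_finrank_add_one
    rw [Fintype.card_fin] at this
    omega
  have hfin : μ (convexHull ℝ (range B)) ≠ ⊤ :=
    ((finite_range B).isCompact_convexHull ℝ).measure_lt_top.ne
  have h := B.measure_convexHull_eq_add_sum_corner μ
  simp only [measure_corner, Finset.sum_const, Finset.card_univ, Fintype.card_fin, hdim,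
    nsmul_eq_mul] at h
  have hcoef : ((4 : ℕ) : ℝ≥0∞) * 2⁻¹ ^ 3 = 2⁻¹ := by
    rw [← ENNReal.toReal_eq_toReal_iff' (by simp [ENNReal.mul_eq_top]) (by simp)]
    norm_num
  rw [← mul_assoc, hcoef, ← ENNReal.div_eq_inv_mul] at h
  rw [ENNReal.eq_sub_of_add_eq (ENNReal.div_ne_top hfin two_ne_zero) h.symm, ENNReal.sub_half hfin]

end Measure

end AffineBasis

/-- The interior octahedron of regular (red) refinement of a
nondegenerate tetrahedron `τ = conv{a,b,c,d}` in `ℝ³`, namely the convex hull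
of the six edge midpoints, has volume `vol(Ω) = vol(τ)/2`. -/
theorem octahedron_volume_half
    (a b c d : EuclideanSpace ℝ (Fin 3))
    (h : AffineIndependent ℝ ![a, b, c, d]) :
    volume (convexHull ℝ
        {midpoint ℝ a b, midpoint ℝ a c, midpoint ℝ a d,
         midpoint ℝ b c, midpoint ℝ b d, midpoint ℝ c d}) =
      volume (convexHull ℝ {a, b, c, d}) / 2 := by
  let B : AffineBasis (Fin 4) ℝ (EuclideanSpace ℝ (Fin 3)) :=
    ⟨![a, b, c, d], h, by rw [h.affineSpan_eq_top_iff_card_eq_finrank_add_one]; simp⟩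
  have hT : ({a, b, c, d} : Set (EuclideanSpace ℝ (Fin 3))) = range B := by
    show _ = range ![a, b, c, d]
    simp only [Matrix.range_cons, Matrix.range_empty, union_empty, singleton_union]
  rw [hT, ← B.measure_hypersimplex_eq_half volume, ← B.convexHull_midpoints_eq_hypersimplex]
  rfl
end

section
/- Let H be a real inner product space, let V and W be linear subspaces of H, and suppose the strengthened Cauchy–Schwarz inequality holds between V and W: there exists δ ∈ [0, 1) such that |⟨v, w⟩| ≤ δ ‖v‖ ‖w‖ for all v ∈ V and w ∈ W. Then for all φᶜ ∈ V and φᶠ ∈ W: (1 − δ²) ‖φᶠ‖² ≤ ‖φᶜ + φᶠ‖². -/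
theorem one_sub_sq_mul_norm_sq_le_norm_add_sq_of_neg_le_inner
    {H : Type*} [NormedAddCommGroup H] [InnerProductSpace ℝ H] {x y : H} {δ : ℝ}
    (h : -(δ * ‖x‖ * ‖y‖) ≤ inner ℝ x y) :
    (1 - δ ^ 2) * ‖y‖ ^ 2 ≤ ‖x + y‖ ^ 2 :=
  calc (1 - δ ^ 2) * ‖y‖ ^ 2
      ≤ (‖x‖ - δ * ‖y‖) ^ 2 + (1 - δ ^ 2) * ‖y‖ ^ 2 := le_add_of_nonneg_left (sq_nonneg _)
    _ = ‖x‖ ^ 2 + 2 * -(δ * ‖x‖ * ‖y‖) + ‖y‖ ^ 2 := by ring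
    _ ≤ ‖x‖ ^ 2 + 2 * inner ℝ x y + ‖y‖ ^ 2 := by gcongr
    _ = ‖x + y‖ ^ 2 := (norm_add_sq_real x y).symm

theorem strengthened_cauchy_schwarz_lower_bound_general
    {H : Type*} [NormedAddCommGroup H] [InnerProductSpace ℝ H]
    (V W : Submodule ℝ H)
    (δ : ℝ)
    (hCS : ∀ v ∈ V, ∀ w ∈ W, |(inner ℝ v w : ℝ)| ≤ δ * ‖v‖ * ‖w‖)
    (φc : H) (hφc : φc ∈ V) (φf : H) (hφf : φf ∈ W) :
    (1 - δ ^ 2) * ‖φf‖ ^ 2 ≤ ‖φc + φf‖ ^ 2 :=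
  one_sub_sq_mul_norm_sq_le_norm_add_sq_of_neg_le_inner
    (neg_le_of_abs_le (hCS φc hφc φf hφf))

/-- If the strengthened Cauchy–Schwarz inequality
`|⟨v,w⟩| ≤ δ‖v‖‖w‖` holds uniformly between subspaces `V` and `W` of a real
inner product space `H` with `δ ∈ [0,1)`, then for all `φᶜ ∈ V`, `φᶠ ∈ W`:
`(1 − δ²)‖φᶠ‖² ≤ ‖φᶜ + φᶠ‖²`. -/
theorem strengthened_cauchy_schwarz_lower_bound
    {H : Type*} [NormedAddCommGroup H] [InnerProductSpace ℝ H]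
    (V W : Submodule ℝ H)
    (δ : ℝ) (hδ : δ ∈ Set.Ico (0 : ℝ) 1)
    (hCS : ∀ v ∈ V, ∀ w ∈ W, |(inner ℝ v w : ℝ)| ≤ δ * ‖v‖ * ‖w‖)
    (φc : H) (hφc : φc ∈ V) (φf : H) (hφf : φf ∈ W) :
    (1 - δ ^ 2) * ‖φf‖ ^ 2 ≤ ‖φc + φf‖ ^ 2 :=
  strengthened_cauchy_schwarz_lower_bound_general V W δ hCS φc hφc φf hφf
end

section
/- Let V be a vector space over a field, let J ≥ 1, and let S₀ ⊆ S₁ ⊆ ⋯ ⊆ S_J = V be a nested chain of linear subspaces. For j = 0, …, J let I_j : V → V be linear maps with range(I_j) ⊆ S_j and I_j u = u for all u ∈ S_j, and assume I_J = id. For j = 0, …, J−1 let Q_j^a : V → V be linear maps with range(Q_j^a) ⊆ S_j. Define, for 0 ≤ k ≤ J−1, the operator Q̃_k = ∏_{j=k}^{J−1} ( I_j + Q_j^a ∘ (I_{j+1} − I_j) ), where the factor with j = k is applied last (leftmost), and set Q̃_J = id. Then: (i) Q̃_k u = u for every u ∈ S_k; (ii) range(Q̃_k) ⊆ S_k; and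 consequently (iii) Q̃_k is idempotent, Q̃_k ∘ Q̃_k = Q̃_k, so Q̃_k is a linear projection onto S_k. -/
/-- The ordered product `F_k ∘ F_{k+1} ∘ ⋯ ∘ F_{J-1}` of a family of linear
endomorphisms (the factor with index `k` applied last, i.e. leftmost); for
`k ≥ J` it is the identity. -/
def whbProd {K V : Type*} [Field K] [AddCommGroup V] [Module K V]
    (F : ℕ → (V →ₗ[K] V)) (J k : ℕ) : V →ₗ[K] V :=
  (((List.range (J - k)).map fun i => F (k + i)).prod : Module.End K V)

lemma whbProd_succ {K V : Type*} [Field K] [AddCommGroup V] [Module K V]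
    (F : ℕ → (V →ₗ[K] V)) (J k : ℕ) (hk : k < J) :
    whbProd F J k = F k * whbProd F J (k + 1) := by
  unfold whbProd
  obtain ⟨n, hn⟩ : ∃ n, J - k = n + 1 := ⟨J - (k + 1), by omega⟩
  have hn' : J - (k + 1) = n := by omega
  rw [hn, hn', List.range_succ_eq_map]
  simp only [List.map_cons, List.prod_cons, List.map_map, Nat.add_zero]
  congr 1
  congr 1
  apply List.map_congr_left
  intro i _
  show F (k + (i + 1)) = F (k + 1 + i)
  ring_nf

/-- For nested subspaces `S₀ ⊆ ⋯ ⊆ S_J = V`, linear projections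
`I_j` onto `S_j` with `I_J = id`, and linear maps `Q_j^a` into `S_j`, the
wavelet-modified operator `Q̃_k = ∏_{j=k}^{J-1} (I_j + Q_j^a ∘ (I_{j+1} − I_j))`
(with `Q̃_J = id`) satisfies: (i) `Q̃_k` fixes `S_k` pointwise; (ii) its range
lies in `S_k`; and (iii) it is idempotent, hence a linear projection onto
`S_k`. -/
theorem whb_quasi_projection
    {K V : Type*} [Field K] [AddCommGroup V] [Module K V]
    (J : ℕ) (hJ : 1 ≤ J)
    (S : ℕ → Submodule K V)
    (hnest : ∀ j, j < J → S j ≤ S (j + 1))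
    (hSJ : S J = ⊤)
    (I : ℕ → (V →ₗ[K] V))
    (hIrange : ∀ j, j ≤ J → LinearMap.range (I j) ≤ S j)
    (hIfix : ∀ j, j ≤ J → ∀ u ∈ S j, I j u = u)
    (hIJ : I J = LinearMap.id)
    (Qa : ℕ → (V →ₗ[K] V))
    (hQa : ∀ j, j < J → LinearMap.range (Qa j) ≤ S j)
    (k : ℕ) (hk : k ≤ J) :
    (∀ u ∈ S k, whbProd (fun j => I j + Qa j * (I (j + 1) - I j)) J k u = u) ∧
      LinearMap.range (whbProd (fun j => I j + Qa j * (I (j + 1) - I j)) J k) ≤ S k ∧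
      whbProd (fun j => I j + Qa j * (I (j + 1) - I j)) J k *
          whbProd (fun j => I j + Qa j * (I (j + 1) - I j)) J k =
        whbProd (fun j => I j + Qa j * (I (j + 1) - I j)) J k := by
  set F : ℕ → (V →ₗ[K] V) := fun j => I j + Qa j * (I (j + 1) - I j) with hF
  have key : ∀ d k, k + d = J →
      (∀ u ∈ S k, whbProd F J k u = u) ∧
        LinearMap.range (whbProd F J k) ≤ S k := by
    intro d
    induction d with
    | zero =>
      intro k hkJ
      have hkJ' : k = J := by omega
      have hid : whbProd F J k = 1 := by
        unfold whbProd
        simp [hkJ']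
      constructor
      · intro u _; rw [hid]; rfl
      · rw [hid, hkJ', hSJ]; exact le_top
    | succ d ih =>
      intro k hkJ
      have hklt : k < J := by omega
      obtain ⟨ihfix, ihrange⟩ := ih (k + 1) (by omega)
      rw [whbProd_succ F J k hklt]
      have hFk : ∀ v, F k v = I k v + Qa k (I (k + 1) v - I k v) := by
        intro v; simp [hF, Module.End.mul_apply]
      have hFk_mem : ∀ v, F k v ∈ S k := by
        intro v
        rw [hFk]
        exact Submodule.add_mem _ (hIrange k (le_of_lt hklt) ⟨v, rfl⟩)
          (hQa k hklt ⟨_, rfl⟩)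
      constructor
      · intro u hu
        have hu' : u ∈ S (k + 1) := hnest k hklt hu
        have h1 : whbProd F J (k + 1) u = u := ihfix u hu'
        have h2 : I (k + 1) u = u := hIfix (k + 1) (by omega) u hu'
        have h3 : I k u = u := hIfix k (le_of_lt hklt) u hu
        simp [Module.End.mul_apply, h1, hFk, h2, h3]
      · rintro v ⟨w, rfl⟩
        exact hFk_mem _
  obtain ⟨hfix, hrange⟩ := key (J - k) k (by omega)
  refine ⟨hfix, hrange, ?_⟩
  ext v
  exact hfix _ (hrange ⟨v, rfl⟩)
end

section
/- In the setting of nested subspaces S₀ ⊆ ⋯ ⊆ S_J = V of a vector space V, with linear maps I_j (range(I_j) ⊆ S_j, I_j fixing S_j pointwise, I_J = id) and linear maps Q_j^a with range(Q_j^a) ⊆ S_j, define Q̃_k = ∏_{j=k}^{J−1} ( I_j + Q_j^a ∘ (I_{j+1} − I_j) ) for 0 ≤ k ≤ J−1 (factor j = k leftmost) and Q̃_J = id. Then the operators satisfy the semigroup/commutation property Q̃_k ∘ Q̃_l = Q̃_l ∘ Q̃_k = Q̃_{min(k,l)} for all 0 ≤ k, l ≤ J. -/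
/-- For nested subspaces `S₀ ⊆ ⋯ ⊆ S_J = V`, linear projections
`I_j` onto `S_j` with `I_J = id`, and linear maps `Q_j^a` into `S_j`, the
wavelet-modified operators `Q̃_k = ∏_{j=k}^{J-1} (I_j + Q_j^a ∘ (I_{j+1} − I_j))`
(with `Q̃_J = id`) satisfy the semigroup/commutation property
`Q̃_k ∘ Q̃_l = Q̃_l ∘ Q̃_k = Q̃_{min(k,l)}` for all `0 ≤ k, l ≤ J`. -/
theorem whb_quasi_projection_commute
    {K V : Type*} [Field K] [AddCommGroup V] [Module K V]
    (J : ℕ) (hJ : 1 ≤ J)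
    (S : ℕ → Submodule K V)
    (hnest : ∀ j, j < J → S j ≤ S (j + 1))
    (hSJ : S J = ⊤)
    (I : ℕ → (V →ₗ[K] V))
    (hIrange : ∀ j, j ≤ J → LinearMap.range (I j) ≤ S j)
    (hIfix : ∀ j, j ≤ J → ∀ u ∈ S j, I j u = u)
    (hIJ : I J = LinearMap.id)
    (Qa : ℕ → (V →ₗ[K] V))
    (hQa : ∀ j, j < J → LinearMap.range (Qa j) ≤ S j)
    (k l : ℕ) (hk : k ≤ J) (hl : l ≤ J) :
    whbProd (fun j => I j + Qa j * (I (j + 1) - I j)) J k *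
        whbProd (fun j => I j + Qa j * (I (j + 1) - I j)) J l =
      whbProd (fun j => I j + Qa j * (I (j + 1) - I j)) J (min k l) ∧
    whbProd (fun j => I j + Qa j * (I (j + 1) - I j)) J l *
        whbProd (fun j => I j + Qa j * (I (j + 1) - I j)) J k =
      whbProd (fun j => I j + Qa j * (I (j + 1) - I j)) J (min k l) := by

  set F : ℕ → (V →ₗ[K] V) := fun j => I j + Qa j * (I (j + 1) - I j) with hFdef
  -- monotonicity of S
  have hmono : ∀ a b, a ≤ b → b ≤ J → S a ≤ S b := by
    intro a b hab hbJ
    induction b with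
    | zero =>
      have : a = 0 := Nat.le_zero.mp hab
      simp [this]
    | succ n ih =>
      rcases Nat.lt_or_ge a (n + 1) with h | h
      · exact le_trans (ih (Nat.lt_succ_iff.mp h) (by omega)) (hnest n (by omega))
      · have : a = n + 1 := le_antisymm hab h
        simp [this]
  -- the factors are projections onto S j
  have hFrange : ∀ j, j < J → LinearMap.range (F j) ≤ S j := by
    intro j hj v hv
    obtain ⟨u, rfl⟩ := hv
    have h1 : I j u ∈ S j := hIrange j (le_of_lt hj) ⟨u, rfl⟩
    have h2 : Qa j ((I (j + 1) - I j) u) ∈ S j := hQa j hj ⟨_, rfl⟩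
    simpa [hFdef, LinearMap.add_apply, Module.End.mul_apply] using
      (S j).add_mem h1 h2
  have hFfix : ∀ j, j < J → ∀ u ∈ S j, F j u = u := by
    intro j hj u hu
    have h1 : I j u = u := hIfix j (le_of_lt hj) u hu
    have h2 : I (j + 1) u = u := hIfix (j + 1) hj u (hnest j hj hu)
    simp [hFdef, LinearMap.add_apply, Module.End.mul_apply, LinearMap.sub_apply,
      h1, h2]
  -- splitting of the ordered product
  have hsplit : ∀ a b : ℕ, a ≤ b → b ≤ J →
      whbProd F J a = whbProd F b a * whbProd F J b := by
    intro a b hab hbJ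
    unfold whbProd
    rw [show J - a = (b - a) + (J - b) by omega, List.range_add,
      List.map_append, List.prod_append, List.map_map]
    congr 1
    apply congrArg List.prod
    apply List.map_congr_left
    intro i _
    simp only [Function.comp]
    congr 1
    omega
  have hstep : ∀ l, l < J → whbProd F J l = F l * whbProd F J (l + 1) := by
    intro l hl
    rw [hsplit l (l + 1) (by omega) hl]
    congr 1
    unfold whbProd
    rw [show l + 1 - l = 1 by omega]
    simp [List.range_succ]
  have hid : whbProd F J J = 1 := by
    unfold whbProd
    simp
  -- range of the product
  have hrange : ∀ n l, l ≤ J → J - l = n →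
      LinearMap.range (whbProd F J l) ≤ S l := by
    intro n
    induction n with
    | zero =>
      intro l hlJ hn
      have : l = J := by omega
      subst this
      rw [hid, hSJ]
      intro v _; trivial
    | succ n ih =>
      intro l hlJ hn
      have hlJ' : l < J := by omega
      rw [hstep l hlJ']
      intro v hv
      obtain ⟨u, rfl⟩ := hv
      exact hFrange l hlJ' ⟨_, rfl⟩
  -- fixing S l
  have hfix : ∀ n l, l ≤ J → J - l = n → ∀ u ∈ S l, whbProd F J l u = u := by
    intro n
    induction n with
    | zero =>
      intro l hlJ hn u hu
      have : l = J := by omega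
      subst this
      rw [hid]; rfl
    | succ n ih =>
      intro l hlJ hn u hu
      have hlJ' : l < J := by omega
      rw [hstep l hlJ']
      have h1 : whbProd F J (l + 1) u = u :=
        ih (l + 1) hlJ' (by omega) u (hnest l hlJ' hu)
      simp only [Module.End.mul_apply, h1]
      exact hFfix l hlJ' u hu
  -- main helper
  have main : ∀ a b, a ≤ b → b ≤ J →
      whbProd F J a * whbProd F J b = whbProd F J a ∧
      whbProd F J b * whbProd F J a = whbProd F J a := by
    intro a b hab hbJ
    have hidem : whbProd F J b * whbProd F J b = whbProd F J b := by
      ext u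
      simp only [Module.End.mul_apply]
      exact hfix (J - b) b hbJ rfl _ (hrange (J - b) b hbJ rfl ⟨u, rfl⟩)
    constructor
    · rw [hsplit a b hab hbJ, mul_assoc, hidem]
    · ext u
      simp only [Module.End.mul_apply]
      exact hfix (J - b) b hbJ rfl _
        (hmono a b hab hbJ (hrange (J - a) a (le_trans hab hbJ) rfl ⟨u, rfl⟩))
  rcases le_total k l with h | h
  · rw [min_eq_left h]
    exact ⟨(main k l h hl).1, (main k l h hl).2⟩
  · rw [min_eq_right h]
    exact ⟨(main l k h hk).2, (main l k h hk).1⟩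
end

section
/- Let H be a real Hilbert space, let J ≥ 1, and let S₀ ⊆ S₁ ⊆ ⋯ ⊆ S_J = H be a nested chain of closed (complete) linear subspaces, with P_j : H → H the orthogonal projection onto S_j. For j = 0, …, J let I_j : H → H be linear maps with range(I_j) ⊆ S_j and I_j u = u for all u ∈ S_j, and assume I_J = id. Then in the limiting case where the approximate projections are exact, the wavelet-modified operator collapses to the exact orthogonal projection: for every 0 ≤ k ≤ J−1, ∏_{j=k}^{J−1} ( I_j + P_j ∘ (I_{j+1} − I_j) ) = P_k, where the factor with j = k is applied last (leftmost). -/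
open scoped InnerProductSpace

section OrthogonalProjection

variable {𝕜 E : Type*} [RCLike 𝕜] [NormedAddCommGroup E] [InnerProductSpace 𝕜 E]
  {K : Submodule 𝕜 E}

theorem eq_of_mem_of_inner_sub_eq_zero {u x y : E} (hx : x ∈ K) (hy : y ∈ K)
    (hxo : ∀ v ∈ K, ⟪u - x, v⟫_𝕜 = 0) (hyo : ∀ v ∈ K, ⟪u - y, v⟫_𝕜 = 0) : x = y := by
  have hxy : x - y ∈ K := K.sub_mem hx hy
  have hself : ⟪x - y, x - y⟫_𝕜 = 0 :=
    calc ⟪x - y, x - y⟫_𝕜 = ⟪u - y, x - y⟫_𝕜 - ⟪u - x, x - y⟫_𝕜 := by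
          rw [← inner_sub_left, sub_sub_sub_cancel_left]
      _ = 0 := by rw [hyo _ hxy, hxo _ hxy, sub_zero]
  exact sub_eq_zero.mp (inner_self_eq_zero.mp hself)

variable {P : E →ₗ[𝕜] E} (hmem : ∀ u, P u ∈ K) (horth : ∀ u, ∀ v ∈ K, ⟪u - P u, v⟫_𝕜 = 0)
include hmem horth

theorem apply_eq_self_of_mem_of_inner_sub_eq_zero {u : E} (hu : u ∈ K) : P u = u :=
  eq_of_mem_of_inner_sub_eq_zero (hmem u) hu (horth u) (by simp)

theorem mul_eq_self_of_range_le_of_inner_sub_eq_zero {A : E →ₗ[𝕜] E}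
    (hA : LinearMap.range A ≤ K) : P * A = A :=
  LinearMap.ext fun u =>
    apply_eq_self_of_mem_of_inner_sub_eq_zero hmem horth (hA (LinearMap.mem_range_self A u))

theorem mul_eq_left_of_le_of_inner_sub_eq_zero {L : Submodule 𝕜 E} {Q : E →ₗ[𝕜] E}
    (hQorth : ∀ u, ∀ v ∈ L, ⟪u - Q u, v⟫_𝕜 = 0) (hKL : K ≤ L) : P * Q = P := by
  refine LinearMap.ext fun u => eq_of_mem_of_inner_sub_eq_zero (hmem (Q u)) (hmem u)
    (horth (Q u)) fun v hv => ?_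
  have hsplit : Q u - P u = (u - P u) - (u - Q u) := (sub_sub_sub_cancel_left _ _ _).symm
  rw [hsplit, inner_sub_left, horth u v hv, hQorth u v (hKL hv), sub_zero]

end OrthogonalProjection

theorem add_mul_sub_mul_eq_of_mul_eq {R : Type*} [Ring R] {a b p q : R}
    (hb : b * q = q) (hp : p * a = a) (hpq : p * q = p) : (a + p * (b - a)) * q = p := by
  rw [add_mul, mul_assoc, sub_mul, hb, mul_sub, hpq, ← mul_assoc, hp, add_sub_cancel]

section WhbProd

variable {K V : Type*} [Field K] [AddCommGroup V] [Module K V] (F : ℕ → (V →ₗ[K] V)) {J : ℕ}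

theorem whbProd_self : whbProd F J J = 1 := by
  simp [whbProd]

theorem whbProd_eq_mul_whbProd_succ {k : ℕ} (hk : k < J) :
    whbProd F J k = F k * whbProd F J (k + 1) := by
  obtain ⟨n, rfl⟩ := Nat.exists_eq_add_of_lt hk
  have hlen : k + n + 1 - k = n + 1 := by omega
  have hlen' : k + n + 1 - (k + 1) = n := by omega
  rw [whbProd, whbProd, hlen, hlen', List.range_succ_eq_map, List.map_cons, List.prod_cons,
    List.map_map, Nat.add_zero]
  congr 3
  funext i
  exact congrArg F (by omega)

theorem whbProd_eq_of_mul_eq {Q : ℕ → (V →ₗ[K] V)} (hQ : Q J = 1)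
    (hF : ∀ j < J, F j * Q (j + 1) = Q j) {k : ℕ} (hk : k ≤ J) : whbProd F J k = Q k := by
  induction hk using Nat.decreasingInduction with
  | self => rw [whbProd_self, hQ]
  | of_succ j hj ih => rw [whbProd_eq_mul_whbProd_succ F hj, ih, hF j hj]

end WhbProd

theorem whb_exact_projection_collapse_general
    {H : Type*} [NormedAddCommGroup H] [InnerProductSpace ℝ H]
    (J : ℕ)
    (S : ℕ → Submodule ℝ H)
    (hnest : ∀ j, j < J → S j ≤ S (j + 1))
    (hSJ : S J = ⊤)
    (P : ℕ → (H →ₗ[ℝ] H))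
    (hPmem : ∀ j, j ≤ J → ∀ u, P j u ∈ S j)
    (hPorth : ∀ j, j ≤ J → ∀ u, ∀ v ∈ S j, (inner ℝ (u - P j u) v : ℝ) = 0)
    (I : ℕ → (H →ₗ[ℝ] H))
    (hIrange : ∀ j, j ≤ J → LinearMap.range (I j) ≤ S j)
    (hIfix : ∀ j, j ≤ J → ∀ u ∈ S j, I j u = u)
    (k : ℕ) (hk : k < J) :
    whbProd (fun j => I j + P j * (I (j + 1) - I j)) J k = P k := by
  have hPJ : P J = 1 := LinearMap.ext fun u =>
    apply_eq_self_of_mem_of_inner_sub_eq_zero (hPmem J le_rfl) (hPorth J le_rfl)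
      (hSJ ▸ Submodule.mem_top)
  refine whbProd_eq_of_mul_eq _ hPJ (fun j hj => ?_) hk.le
  have hIP : I (j + 1) * P (j + 1) = P (j + 1) :=
    LinearMap.ext fun u => hIfix (j + 1) hj _ (hPmem (j + 1) hj u)
  exact add_mul_sub_mul_eq_of_mul_eq hIP
    (mul_eq_self_of_range_le_of_inner_sub_eq_zero (hPmem j hj.le) (hPorth j hj.le)
      (hIrange j hj.le))
    (mul_eq_left_of_le_of_inner_sub_eq_zero (hPmem j hj.le) (hPorth j hj.le)
      (hPorth (j + 1) hj) (hnest j hj))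

/-- In a real Hilbert space `H` with nested closed subspaces
`S₀ ⊆ ⋯ ⊆ S_J = H`, orthogonal projections `P_j : H → H` onto `S_j`
(characterized by `P_j u ∈ S_j` and `u − P_j u ⟂ S_j`), and linear
interpolation projections `I_j` onto `S_j` with `I_J = id`, the
wavelet-modified operator with exact projections collapses to the orthogonal
projection: `∏_{j=k}^{J-1} (I_j + P_j ∘ (I_{j+1} − I_j)) = P_k` for `k < J`. -/
theorem whb_exact_projection_collapse
    {H : Type*} [NormedAddCommGroup H] [InnerProductSpace ℝ H] [CompleteSpace H]
    (J : ℕ) (hJ : 1 ≤ J)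
    (S : ℕ → Submodule ℝ H)
    (hclosed : ∀ j, j ≤ J → IsClosed (S j : Set H))
    (hnest : ∀ j, j < J → S j ≤ S (j + 1))
    (hSJ : S J = ⊤)
    (P : ℕ → (H →ₗ[ℝ] H))
    (hPmem : ∀ j, j ≤ J → ∀ u, P j u ∈ S j)
    (hPorth : ∀ j, j ≤ J → ∀ u, ∀ v ∈ S j, (inner ℝ (u - P j u) v : ℝ) = 0)
    (I : ℕ → (H →ₗ[ℝ] H))
    (hIrange : ∀ j, j ≤ J → LinearMap.range (I j) ≤ S j)
    (hIfix : ∀ j, j ≤ J → ∀ u ∈ S j, I j u = u)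
    (hIJ : I J = LinearMap.id)
    (k : ℕ) (hk : k < J) :
    whbProd (fun j => I j + P j * (I (j + 1) - I j)) J k = P k :=
  whb_exact_projection_collapse_general J S hnest hSJ P hPmem hPorth I hIrange hIfix k hk
end

section
/- Let E be a real vector space equipped with a norm ‖·‖₁ (playing the role of the H¹-norm) and a seminorm p (playing the role of the L²-norm), let J ≥ 0, and let Q̃₀, …, Q̃_J : E → E be linear operators satisfying Q̃_j ∘ Q̃_k = Q̃_{min(j,k)} for all 0 ≤ j, k ≤ J; set Q̃_{−1} = 0. Suppose the family induces an optimal preconditioner, i.e. there exist constants 0 < σ₁ ≤ σ₂ < ∞ such that σ₁ ‖u‖₁² ≤ ∑_{j=0}^{J} 4^{j} · p( (Q̃_j − Q̃_{j−1}) u )² ≤ σ₂ ‖u‖₁² for all u ∈ E. Then each Q̃_k is stable in the ‖·‖₁-norm: ‖Q̃_k u‖₁² ≤ (σ₂/σ₁) ‖u‖₁² for all 0 ≤ k ≤ J and all u ∈ E. -/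
/-- Let `E` be a real vector space with a norm `n` (the `H¹`-norm)
and a seminorm `p` (the `L²`-norm), and let `Q̃₀, …, Q̃_J` be linear operators
satisfying `Q̃_j ∘ Q̃_k = Q̃_{min(j,k)}` (with the convention `Q̃_{−1} = 0`).
If the family induces an optimal preconditioner, i.e.
`σ₁ n(u)² ≤ ∑_{j=0}^J 4^j p((Q̃_j − Q̃_{j−1})u)² ≤ σ₂ n(u)²` for all `u`,
then each `Q̃_k` is stable in the `n`-norm: `n(Q̃_k u)² ≤ (σ₂/σ₁) n(u)²`. -/
theorem optimal_preconditioner_implies_H1_stability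
    {E : Type*} [AddCommGroup E] [Module ℝ E]
    (n : Seminorm ℝ E) (hn : ∀ u : E, n u = 0 → u = 0)
    (p : Seminorm ℝ E)
    (J : ℕ)
    (Qt : ℕ → (E →ₗ[ℝ] E))
    (hQ : ∀ j, j ≤ J → ∀ k, k ≤ J → (Qt j) ∘ₗ (Qt k) = Qt (min j k))
    (σ₁ σ₂ : ℝ) (hσ₁ : 0 < σ₁) (hσ : σ₁ ≤ σ₂)
    (hopt : ∀ u : E,
      σ₁ * (n u) ^ 2 ≤
          (∑ j ∈ Finset.range (J + 1),
            (4 : ℝ) ^ j * (p (Qt j u - if j = 0 then 0 else Qt (j - 1) u)) ^ 2) ∧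
        (∑ j ∈ Finset.range (J + 1),
            (4 : ℝ) ^ j * (p (Qt j u - if j = 0 then 0 else Qt (j - 1) u)) ^ 2) ≤
          σ₂ * (n u) ^ 2) :
    ∀ k, k ≤ J → ∀ u : E, (n (Qt k u)) ^ 2 ≤ (σ₂ / σ₁) * (n u) ^ 2 := by
  intro k hk u
  -- pointwise composition facts
  have hcomp : ∀ j, j ≤ J → Qt j (Qt k u) = Qt (min j k) u := by
    intro j hj
    have := hQ j hj k hk
    exact congrArg (fun f : E →ₗ[ℝ] E => f u) this
  -- compare the sums termwise
  have hterm : ∀ j ∈ Finset.range (J + 1),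
      (4 : ℝ) ^ j * (p (Qt j (Qt k u) - if j = 0 then 0 else Qt (j - 1) (Qt k u))) ^ 2 ≤
      (4 : ℝ) ^ j * (p (Qt j u - if j = 0 then 0 else Qt (j - 1) u)) ^ 2 := by
    intro j hj
    rw [Finset.mem_range] at hj
    have hjJ : j ≤ J := Nat.lt_succ_iff.mp hj
    by_cases hjk : j ≤ k
    · -- equal terms
      have h1 : Qt j (Qt k u) = Qt j u := by
        rw [hcomp j hjJ, min_eq_left hjk]
      rcases Nat.eq_zero_or_pos j with h0 | h0
      · subst h0; simp [h1]
      · have hj1 : j - 1 ≤ J := le_trans (Nat.sub_le _ _) hjJ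
        have h2 : Qt (j - 1) (Qt k u) = Qt (j - 1) u := by
          rw [hcomp (j - 1) hj1, min_eq_left (le_trans (Nat.sub_le _ _) hjk)]
        simp [Nat.pos_iff_ne_zero.mp h0, h1, h2]
    · -- term vanishes
      push_neg at hjk
      have hjne : j ≠ 0 := by omega
      have h1 : Qt j (Qt k u) = Qt k u := by
        rw [hcomp j hjJ, min_eq_right (le_of_lt hjk)]
      have h2 : Qt (j - 1) (Qt k u) = Qt k u := by
        rw [hcomp (j - 1) (le_trans (Nat.sub_le _ _) hjJ),
          min_eq_right (by omega : k ≤ j - 1)]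
      have hz : Qt j (Qt k u) - (if j = 0 then 0 else Qt (j - 1) (Qt k u)) = 0 := by
        simp [hjne, h1, h2]
      rw [hz, map_zero]
      rw [(by norm_num : ((0:ℝ))^2 = 0), mul_zero]
      positivity
  have hsum := Finset.sum_le_sum hterm
  have h1 := (hopt (Qt k u)).1
  have h2 := (hopt u).2
  have key : σ₁ * (n (Qt k u)) ^ 2 ≤ σ₂ * (n u) ^ 2 :=
    le_trans h1 (le_trans hsum h2)
  rw [div_mul_eq_mul_div, le_div_iff₀ hσ₁]
  linarith [key]
end
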